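/- Let L be an algebraic lattice. Then the set of algebraic (finitary) closure operators on L, ordered pointwise, is a complete lattice: every family (φ_i)_{i∈I} of algebraic closure operators has a greatest lower bound among algebraic closure operators, given by x ↦ ⨆ {⨅_{i∈I} φ_i(k) : k compact, k ≤ x}, and a least upper bound among algebraic closure operators, given by x ↦ ⨆ over all finite sequences (j₁,…,j_k) with entries in I (including the empty sequence, which contributes x) of φ_{j₁}(φ_{j₂}(⋯φ_{j_k}(x)⋯)). -/

import Mathlib

/-- The compact elements of a complete lattice, as `CompleteLattice.IsCompactElement` was
defined in Mathlib of December 2024 (since removed from Mathlib). -/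
def CompleteLattice.IsCompactElement {α : Type*} [CompleteLattice α] (k : α) : Prop :=
  ∀ s : Set α, k ≤ sSup s → ∃ t : Finset α, ↑t ⊆ s ∧ k ≤ t.sup id

/-- A closure operator on a complete lattice: extensive, idempotent and isotone. -/
def IsClosureOp {L : Type*} [CompleteLattice L] (φ : L → L) : Prop :=
  (∀ x, x ≤ φ x) ∧ (∀ x, φ (φ x) = φ x) ∧ (∀ x y : L, x ≤ y → φ x ≤ φ y)

/-- A map on a complete lattice is finitary if its value at `x` is the sup of its
values at the compact elements below `x`. -/
def Finitary {L : Type*} [CompleteLattice L] (φ : L → L) : Prop :=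
  ∀ x : L, φ x = ⨆ k ∈ {k : L | CompleteLattice.IsCompactElement k ∧ k ≤ x}, φ k

/-- The composite `φ_{j₁} ∘ φ_{j₂} ∘ ⋯ ∘ φ_{j_k}` indexed by a finite sequence
`j = (j₁, …, j_k)`; the empty sequence gives the identity. -/
def seqComp {L : Type*} {I : Type*} (φ : I → L → L) (j : List I) : L → L :=
  (j.map φ).foldr (· ∘ ·) id

/-!
The meet of the `φ i` is a closure operator, but need not be finitary; restricting it to
compact elements and extending by directed joins yields the largest finitary closure operator
below it. For the join, the finite composites `φ_{j₁} ∘ ⋯ ∘ φ_{j_k}` form a directed family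
(concatenate sequences), so their pointwise join is again finitary; it is idempotent because
each `φ i` commutes with directed joins, being finitary.
-/

section Compact

variable {L : Type*} [CompleteLattice L]

def compactsBelow (x : L) : Set L := {k | CompleteLattice.IsCompactElement k ∧ k ≤ x}

theorem CompleteLattice.isCompactElement_iff_isCompactElement {k : L} :
    CompleteLattice.IsCompactElement k ↔ _root_.IsCompactElement k :=
  (isCompactElement_iff_exists_le_sSup_of_le_sSup L k).symm

theorem CompleteLattice.IsCompactElement.exists_le_of_le_sSup {c : L}
    (hc : CompleteLattice.IsCompactElement c) {s : Set L} (hne : s.Nonempty)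
    (hdir : DirectedOn (· ≤ ·) s) (h : c ≤ sSup s) : ∃ a ∈ s, c ≤ a :=
  (isCompactElement_iff_le_of_directed_sSup_le L c).mp
    (isCompactElement_iff_isCompactElement.mp hc) s hne hdir h

theorem CompleteLattice.isCompactElement_bot : CompleteLattice.IsCompactElement (⊥ : L) :=
  fun _ _ => ⟨∅, by simp⟩

theorem CompleteLattice.IsCompactElement.sup {a b : L} (ha : CompleteLattice.IsCompactElement a)
    (hb : CompleteLattice.IsCompactElement b) : CompleteLattice.IsCompactElement (a ⊔ b) := by
  classical
  intro s hs
  obtain ⟨t₁, ht₁, hat⟩ := ha s (le_sup_left.trans hs)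
  obtain ⟨t₂, ht₂, hbt⟩ := hb s (le_sup_right.trans hs)
  refine ⟨t₁ ∪ t₂, by simpa using And.intro ht₁ ht₂, ?_⟩
  rw [Finset.sup_union]
  exact sup_le_sup hat hbt

theorem compactsBelow_nonempty (x : L) : (compactsBelow x).Nonempty :=
  ⟨⊥, CompleteLattice.isCompactElement_bot, bot_le⟩

theorem directedOn_compactsBelow (x : L) : DirectedOn (· ≤ ·) (compactsBelow x) :=
  directedOn_of_sup_mem fun _ _ ha hb => ⟨ha.1.sup hb.1, sup_le ha.2 hb.2⟩

theorem biSup_compactsBelow [IsCompactlyGenerated L] (x : L) : ⨆ k ∈ compactsBelow x, k = x := by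
  have : compactsBelow x = {c : L | _root_.IsCompactElement c ∧ c ≤ x} := by
    ext k
    exact and_congr_left' CompleteLattice.isCompactElement_iff_isCompactElement
  rw [← sSup_eq_iSup, this, sSup_compact_le_eq]

end Compact

section Finitary

variable {L : Type*} [CompleteLattice L] {f g : L → L}

theorem finitary_of_le_biSup (hf : Monotone f) (h : ∀ x, f x ≤ ⨆ k ∈ compactsBelow x, f k) :
    Finitary f :=
  fun x => (h x).antisymm (iSup₂_le fun _ hk => hf hk.2)

theorem finitary_id [IsCompactlyGenerated L] : Finitary (id : L → L) :=
  fun x => (biSup_compactsBelow x).symm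

theorem finitary_iSup {ι : Sort*} {f : ι → L → L} (hf : ∀ i, Finitary (f i)) :
    Finitary fun x => ⨆ i, f i x := by
  intro x
  calc ⨆ i, f i x = ⨆ i, ⨆ k ∈ compactsBelow x, f i k := iSup_congr fun i => hf i x
    _ = ⨆ k ∈ compactsBelow x, ⨆ i, f i k := by
      rw [iSup_comm]
      exact iSup_congr fun k => iSup_comm

theorem Finitary.map_sSup_le (hmono : Monotone f) (hf : Finitary f) {s : Set L}
    (hne : s.Nonempty) (hdir : DirectedOn (· ≤ ·) s) : f (sSup s) ≤ ⨆ a ∈ s, f a := by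
  rw [hf]
  refine iSup₂_le fun c hc => ?_
  obtain ⟨a, ha, hca⟩ := hc.1.exists_le_of_le_sSup hne hdir hc.2
  exact le_iSup₂_of_le a ha (hmono hca)

theorem Finitary.map_iSup_le {ι : Sort*} [Nonempty ι] {u : ι → L} (hmono : Monotone f)
    (hf : Finitary f) (hdir : Directed (· ≤ ·) u) : f (⨆ i, u i) ≤ ⨆ i, f (u i) := by
  simpa only [sSup_range, iSup_range] using
    hf.map_sSup_le hmono (Set.range_nonempty u) hdir.directedOn_range

theorem Finitary.comp (hfm : Monotone f) (hf : Finitary f) (hgm : Monotone g) (hg : Finitary g) :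
    Finitary (f ∘ g) := by
  refine finitary_of_le_biSup (hfm.comp hgm) fun x => ?_
  calc f (g x) = f (sSup (g '' compactsBelow x)) := by
        rw [sSup_image]
        exact congrArg f (hg x)
    _ ≤ ⨆ a ∈ g '' compactsBelow x, f a :=
      hf.map_sSup_le hfm ((compactsBelow_nonempty x).image g)
        ((directedOn_compactsBelow x).mono_comp fun _ _ h => hgm h)
    _ = ⨆ k ∈ compactsBelow x, f (g k) := iSup_image

end Finitary

section ClosureOp

variable {L : Type*} [CompleteLattice L] {ψ : L → L}

theorem IsClosureOp.le_apply (hψ : IsClosureOp ψ) (x : L) : x ≤ ψ x := hψ.1 x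

theorem IsClosureOp.apply_apply (hψ : IsClosureOp ψ) (x : L) : ψ (ψ x) = ψ x := hψ.2.1 x

theorem IsClosureOp.monotone (hψ : IsClosureOp ψ) : Monotone ψ := fun x y h => hψ.2.2 x y h

theorem IsClosureOp.iInf {ι : Sort*} {φ : ι → L → L} (hφ : ∀ i, IsClosureOp (φ i)) :
    IsClosureOp fun x => ⨅ i, φ i x := by
  refine ⟨fun x => le_iInf fun i => (hφ i).le_apply x, fun x => ?_, fun _ _ h => ?_⟩
  · refine le_antisymm (le_iInf fun i => ?_) (le_iInf fun i => (hφ i).le_apply _)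
    calc ⨅ i, φ i (⨅ i, φ i x) ≤ φ i (φ i x) :=
          (iInf_le _ i).trans ((hφ i).monotone (iInf_le _ i))
      _ = φ i x := (hφ i).apply_apply x
  · exact iInf_mono fun i => (hφ i).monotone h

end ClosureOp

section FinitaryPart

variable {L : Type*} [CompleteLattice L] {ψ ρ : L → L}

def finitaryPart (ψ : L → L) (x : L) : L := ⨆ k ∈ compactsBelow x, ψ k

theorem finitaryPart_mono (ψ : L → L) : Monotone (finitaryPart ψ) :=
  fun _ _ h => iSup₂_le fun k hk => le_iSup₂_of_le k ⟨hk.1, hk.2.trans h⟩ le_rfl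

theorem le_finitaryPart_of_isCompactElement {k : L} (hk : CompleteLattice.IsCompactElement k) :
    ψ k ≤ finitaryPart ψ k :=
  le_iSup₂_of_le k ⟨hk, le_rfl⟩ le_rfl

theorem finitaryPart_le (hψ : Monotone ψ) (x : L) : finitaryPart ψ x ≤ ψ x :=
  iSup₂_le fun _ hk => hψ hk.2

theorem finitary_finitaryPart (ψ : L → L) : Finitary (finitaryPart ψ) :=
  finitary_of_le_biSup (finitaryPart_mono ψ) fun _ =>
    iSup₂_mono fun _ hk => le_finitaryPart_of_isCompactElement hk.1

theorem Finitary.le_finitaryPart (hρ : Finitary ρ) (h : ∀ x, ρ x ≤ ψ x) (x : L) :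
    ρ x ≤ finitaryPart ψ x :=
  (hρ x).trans_le (iSup₂_mono fun k _ => h k)

theorem self_le_finitaryPart [IsCompactlyGenerated L] (hψ : ∀ x, x ≤ ψ x) (x : L) :
    x ≤ finitaryPart ψ x :=
  calc x = ⨆ k ∈ compactsBelow x, k := (biSup_compactsBelow x).symm
    _ ≤ finitaryPart ψ x := iSup₂_mono fun k _ => hψ k

theorem isClosureOp_finitaryPart [IsCompactlyGenerated L] (hψ : IsClosureOp ψ) :
    IsClosureOp (finitaryPart ψ) := by
  refine ⟨self_le_finitaryPart hψ.le_apply, fun x => ?_, fun _ _ h => finitaryPart_mono ψ h⟩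
  refine le_antisymm (iSup₂_le fun c hc => ?_) (self_le_finitaryPart hψ.le_apply _)
  -- the values `ψ k`, `k ∈ compactsBelow x`, form a directed set, so compact `c` lies below one
  obtain ⟨_, ⟨k, hk, rfl⟩, hck⟩ := hc.1.exists_le_of_le_sSup
    ((compactsBelow_nonempty x).image ψ)
    ((directedOn_compactsBelow x).mono_comp fun _ _ h => hψ.monotone h)
    (by rw [sSup_image]; exact hc.2)
  calc ψ c ≤ ψ (ψ k) := hψ.monotone hck
    _ = ψ k := hψ.apply_apply k
    _ ≤ finitaryPart ψ x := le_iSup₂_of_le k hk le_rfl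

end FinitaryPart

section SeqComp

variable {L I : Type*}

@[simp]
theorem seqComp_cons (φ : I → L → L) (i : I) (j : List I) :
    seqComp φ (i :: j) = φ i ∘ seqComp φ j := rfl

theorem seqComp_append (φ : I → L → L) (j j' : List I) :
    seqComp φ (j ++ j') = seqComp φ j ∘ seqComp φ j' := by
  induction j with
  | nil => rfl
  | cons i j ih => rw [List.cons_append, seqComp_cons, seqComp_cons, ih, Function.comp_assoc]

variable [CompleteLattice L] {φ : I → L → L}

theorem monotone_seqComp (hφ : ∀ i, Monotone (φ i)) (j : List I) : Monotone (seqComp φ j) := by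
  induction j with
  | nil => exact monotone_id
  | cons i j ih => exact (hφ i).comp ih

theorem le_seqComp (hφ : ∀ i x, x ≤ φ i x) (j : List I) (x : L) : x ≤ seqComp φ j x := by
  induction j with
  | nil => exact le_rfl
  | cons i j ih => exact ih.trans (hφ i _)

theorem seqComp_le_of_forall_le (hφ : ∀ i, Monotone (φ i)) {y : L} (hy : ∀ i, φ i y ≤ y)
    (j : List I) : seqComp φ j y ≤ y := by
  induction j with
  | nil => exact le_rfl
  | cons i j ih => exact ((hφ i) ih).trans (hy i)

theorem directed_seqComp (hφ : ∀ i, IsClosureOp (φ i)) (x : L) :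
    Directed (· ≤ ·) fun j : List I => seqComp φ j x := by
  have hmono := monotone_seqComp fun i => (hφ i).monotone
  have hle := le_seqComp fun i => (hφ i).le_apply
  intro j j'
  refine ⟨j ++ j', ?_, ?_⟩ <;> simp only [seqComp_append, Function.comp_apply]
  exacts [hmono j (hle j' x), hle j _]

theorem finitary_seqComp [IsCompactlyGenerated L] (hφ : ∀ i, Monotone (φ i))
    (hfin : ∀ i, Finitary (φ i)) (j : List I) : Finitary (seqComp φ j) := by
  induction j with
  | nil => exact finitary_id
  | cons i j ih =>
    rw [seqComp_cons]
    exact (hfin i).comp (hφ i) (monotone_seqComp hφ j) ih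

def seqCompSup (φ : I → L → L) (x : L) : L := ⨆ j : List I, seqComp φ j x

theorem le_seqCompSup (φ : I → L → L) (i : I) (x : L) : φ i x ≤ seqCompSup φ x :=
  le_iSup (fun j => seqComp φ j x) [i]

theorem seqCompSup_le {ρ : L → L} (hρ : IsClosureOp ρ) (h : ∀ i x, φ i x ≤ ρ x) (x : L) :
    seqCompSup φ x ≤ ρ x := by
  refine iSup_le fun j => ?_
  induction j with
  | nil => exact hρ.le_apply x
  | cons i j ih =>
    calc φ i (seqComp φ j x) ≤ ρ (seqComp φ j x) := h i _
      _ ≤ ρ (ρ x) := hρ.monotone ih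
      _ = ρ x := hρ.apply_apply x

theorem finitary_seqCompSup [IsCompactlyGenerated L] (hφ : ∀ i, Monotone (φ i))
    (hfin : ∀ i, Finitary (φ i)) : Finitary (seqCompSup φ) :=
  finitary_iSup (finitary_seqComp hφ hfin)

theorem isClosureOp_seqCompSup (hφ : ∀ i, IsClosureOp (φ i)) (hfin : ∀ i, Finitary (φ i)) :
    IsClosureOp (seqCompSup φ) := by
  have hmono : Monotone (seqCompSup φ) := fun _ _ h =>
    iSup_mono fun j => monotone_seqComp (fun i => (hφ i).monotone) j h
  have hext : ∀ x, x ≤ seqCompSup φ x := fun x => le_iSup (fun j => seqComp φ j x) []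
  refine ⟨hext, fun x => le_antisymm (iSup_le fun j => ?_) (hext _), fun _ _ h => hmono h⟩
  -- `seqCompSup φ x` is `φ i`-closed: `φ i` preserves the directed join defining it
  refine seqComp_le_of_forall_le (fun i => (hφ i).monotone) (fun i => ?_) j
  calc φ i (seqCompSup φ x) ≤ ⨆ j, φ i (seqComp φ j x) :=
      (hfin i).map_iSup_le (hφ i).monotone (directed_seqComp hφ x)
    _ ≤ seqCompSup φ x := iSup_le fun j => le_iSup (fun j => seqComp φ j x) (i :: j)

end SeqComp

/-- The algebraic closure operators on an algebraic lattice, ordered pointwise,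
form a complete lattice: every family has a greatest lower bound among algebraic
closure operators, given by `x ↦ ⨆ {⨅ i, φ_i k : k compact, k ≤ x}`, and a least
upper bound among algebraic closure operators, given by
`x ↦ ⨆_{finite sequences j in I} φ_{j₁}(φ_{j₂}(⋯ φ_{j_k}(x)⋯))`. -/
theorem aco_complete_lattice {L : Type*} [CompleteLattice L] [IsCompactlyGenerated L]
    {I : Type*} (φ : I → L → L)
    (hco : ∀ i, IsClosureOp (φ i)) (hfin : ∀ i, Finitary (φ i)) :
    (IsClosureOp (fun x : L =>
        ⨆ k ∈ {k : L | CompleteLattice.IsCompactElement k ∧ k ≤ x}, ⨅ i, φ i k) ∧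
      Finitary (fun x : L =>
        ⨆ k ∈ {k : L | CompleteLattice.IsCompactElement k ∧ k ≤ x}, ⨅ i, φ i k) ∧
      (∀ (i : I) (x : L),
        (⨆ k ∈ {k : L | CompleteLattice.IsCompactElement k ∧ k ≤ x}, ⨅ i, φ i k) ≤
          φ i x) ∧
      (∀ ρ : L → L, IsClosureOp ρ → Finitary ρ → (∀ (i : I) (x : L), ρ x ≤ φ i x) →
        ∀ x : L, ρ x ≤
          ⨆ k ∈ {k : L | CompleteLattice.IsCompactElement k ∧ k ≤ x}, ⨅ i, φ i k)) ∧
    (IsClosureOp (fun x : L => ⨆ j : List I, seqComp φ j x) ∧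
      Finitary (fun x : L => ⨆ j : List I, seqComp φ j x) ∧
      (∀ (i : I) (x : L), φ i x ≤ ⨆ j : List I, seqComp φ j x) ∧
      (∀ ρ : L → L, IsClosureOp ρ → Finitary ρ → (∀ (i : I) (x : L), φ i x ≤ ρ x) →
        ∀ x : L, (⨆ j : List I, seqComp φ j x) ≤ ρ x)) := by
  have hmono : ∀ i, Monotone (φ i) := fun i => (hco i).monotone
  have hinf : IsClosureOp fun x => ⨅ i, φ i x := IsClosureOp.iInf hco
  refine ⟨⟨isClosureOp_finitaryPart hinf, finitary_finitaryPart _, fun i x => ?_,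
      fun ρ _ hρ hle => hρ.le_finitaryPart fun x => le_iInf (hle · x)⟩,
    ⟨isClosureOp_seqCompSup hco hfin, finitary_seqCompSup hmono hfin, le_seqCompSup φ,
      fun ρ hρ _ hle => seqCompSup_le hρ hle⟩⟩
  exact (finitaryPart_le hinf.monotone x).trans (iInf_le _ i)
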